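/- Let Σ be a signature and T₁, T₂ two fully tilted Σ-terms of the same degree n with the same decoration word. Then T₁ ≤ T₂ in the easterly wind order if and only if sc(T₁)(i) ≤ sc(T₂)(i) for all i ∈ [n], where sc(T)(i) is the number of internal-node descendants of i in T. -/

import Mathlib

structure Signature where
  carrier : Type
  arity : carrier → ℕ

namespace EW

variable {σ : Signature}

/-- Σ-terms: planar rooted trees with nodes decorated by the signature. -/
inductive PreTerm (σ : Signature) where
  | leaf : PreTerm σ
  | node : σ.carrier → List (PreTerm σ) → PreTerm σ

/-- Well-formedness: each internal node decorated by `s` has `arity s` children. -/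
def WF : PreTerm σ → Prop
  | .leaf => True
  | .node s l => l.length = σ.arity s ∧ ∀ t ∈ l, WF t

def isLeaf : PreTerm σ → Bool
  | .leaf => true
  | .node _ _ => false

/-- Subterm at an address (list of 0-based child positions). -/
def subAt : PreTerm σ → List ℕ → Option (PreTerm σ)
  | t, [] => some t
  | .leaf, _ :: _ => none
  | .node _ l, j :: p =>
      match l[j]? with
      | some t => subAt t p
      | none => none
  termination_by t p => p.length

/-- Replace the subterm at an address. -/
def replaceAt : PreTerm σ → List ℕ → PreTerm σ → PreTerm σ
  | _, [], R => R
  | .leaf, _ :: _, _ => .leaf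
  | .node s l, j :: p, R => .node s (l.set j (replaceAt (l.getD j .leaf) p R))
  termination_by t p _ => p.length

/-- Addresses of all positions (internal nodes and leaves) in preorder. -/
def addrs : PreTerm σ → List (List ℕ)
  | .leaf => [[]]
  | .node _ l =>
      [] :: ((l.attach.map (fun t => addrs t.1)).zipIdx.map
        (fun jp => jp.1.map (jp.2 :: ·))).flatten
  decreasing_by
    have := List.sizeOf_lt_of_mem t.2
    simp only [PreTerm.node.sizeOf_spec]
    omega

def isNodeAt (T : PreTerm σ) (p : List ℕ) : Bool :=
  match subAt T p with
  | some (.node _ _) => true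
  | _ => false

/-- Addresses of internal nodes, in preorder. -/
def nodeAddrs (T : PreTerm σ) : List (List ℕ) := (addrs T).filter (isNodeAt T)

/-- Degree: number of internal nodes. -/
def deg (T : PreTerm σ) : ℕ := (nodeAddrs T).length

/-- Address of the `i`-th internal node (1-indexed, preorder). -/
def nodeAddr (T : PreTerm σ) (i : ℕ) : Option (List ℕ) := (nodeAddrs T)[i-1]?

/-- Preorder index (1-based) of the internal node at address `p`. -/
def nodeIdx (T : PreTerm σ) (p : List ℕ) : ℕ := (nodeAddrs T).idxOf p + 1

/-- Parent of internal node `i` (the root is its own parent). -/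
def paOf (T : PreTerm σ) (i : ℕ) : ℕ :=
  match nodeAddr T i with
  | some [] => 1
  | some p => nodeIdx T p.dropLast
  | none => 0

/-- Local position of internal node `i` among its parent's children
(1-based; the root has local position 0). -/
def lpOf (T : PreTerm σ) (i : ℕ) : ℕ :=
  match nodeAddr T i with
  | some [] => 0
  | some p => p.getLast?.getD 0 + 1
  | none => 0

def decAt (T : PreTerm σ) (p : List ℕ) : Option σ.carrier :=
  match subAt T p with
  | some (.node s _) => some s
  | _ => none

/-- The decoration word: decorations of internal nodes in preorder. -/
def dcWord (T : PreTerm σ) : List σ.carrier := (nodeAddrs T).filterMap (decAt T)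

def arityOfNode (T : PreTerm σ) (i : ℕ) : ℕ :=
  match nodeAddr T i with
  | some p =>
      match decAt T p with
      | some s => σ.arity s
      | none => 0
  | none => 0

/-- The connection word entry:
`cnc T i = pa T i + 1 - 2 ^ (lp T i - arity (decoration of pa T i))`. -/
def cnc (T : PreTerm σ) (i : ℕ) : ℚ :=
  (paOf T i : ℚ) + 1 - (2 : ℚ) ^ ((lpOf T i : ℤ) - (arityOfNode T (paOf T i) : ℤ))

def cncWord (T : PreTerm σ) : List ℚ := (List.range (deg T)).map (fun k => cnc T (k+1))

/-- The Σ-easterly wind order. -/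
def ewLE (T₁ T₂ : PreTerm σ) : Prop :=
  dcWord T₁ = dcWord T₂ ∧ ∀ i, 1 ≤ i → i ≤ deg T₁ → cnc T₁ i ≤ cnc T₂ i

/-- The easterly wind rewrite rule `T₁ ⇀_i T₂` : the internal node `i` of `T₁`
is visited immediately after a leaf in preorder, and `T₂` is obtained by moving
the subterm rooted at `i` onto that leaf. -/
def Rewrite (i : ℕ) (T₁ T₂ : PreTerm σ) : Prop :=
  ∃ p q k S,
    nodeAddr T₁ i = some p ∧
    (addrs T₁)[k]? = some q ∧ (addrs T₁)[k+1]? = some p ∧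
    subAt T₁ q = some .leaf ∧
    subAt T₁ p = some S ∧
    T₂ = replaceAt (replaceAt T₁ p .leaf) q S

def RewriteAny (T₁ T₂ : PreTerm σ) : Prop := ∃ i, 1 ≤ i ∧ Rewrite i T₁ T₂

/-- `(i₁, j₁, i)` is dominated by `(i₂, j₂, i)` iff `(i₁, -j₁) ≤lex (i₂, -j₂)`:
here on the pairs of (parent, local position). -/
def Dominated (e₁ e₂ : ℕ × ℕ) : Prop := e₁.1 < e₂.1 ∨ (e₁.1 = e₂.1 ∧ e₂.2 ≤ e₁.2)

/-- `i''` is a (strict) descendant of `i'`. -/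
def Desc (T : PreTerm σ) (i' i'' : ℕ) : Prop :=
  ∃ p q, nodeAddr T i' = some p ∧ nodeAddr T i'' = some q ∧ p <+: q ∧ p ≠ q

end EW
namespace EW

variable {σ : Signature}

def sortNodesFirst (l : List (PreTerm σ)) : List (PreTerm σ) :=
  l.filter (fun t => !isLeaf t) ++ l.filter (fun t => isLeaf t)

def sortLeavesFirst (l : List (PreTerm σ)) : List (PreTerm σ) :=
  l.filter (fun t => isLeaf t) ++ l.filter (fun t => !isLeaf t)

mutual
/-- Tilting map: at every internal node whose preorder index (the second
argument is the index of the current root) belongs to `X`, rearrange the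
children so that the non-leaf children, keeping their relative order, come
before the leaf children. -/
def tltT (X : ℕ → Prop) [DecidablePred X] : PreTerm σ → ℕ → PreTerm σ
  | .leaf, _ => .leaf
  | .node s l, n =>
      .node s (if X n then sortNodesFirst (tltL X l (n+1)) else tltL X l (n+1))
def tltL (X : ℕ → Prop) [DecidablePred X] : List (PreTerm σ) → ℕ → List (PreTerm σ)
  | [], _ => []
  | t :: ts, n => tltT X t n :: tltL X ts (n + deg t)
end

mutual
/-- Reversed tilting map: leaf children first. -/
def tltRT (X : ℕ → Prop) [DecidablePred X] : PreTerm σ → ℕ → PreTerm σ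
  | .leaf, _ => .leaf
  | .node s l, n =>
      .node s (if X n then sortLeavesFirst (tltRL X l (n+1)) else tltRL X l (n+1))
def tltRL (X : ℕ → Prop) [DecidablePred X] : List (PreTerm σ) → ℕ → List (PreTerm σ)
  | [], _ => []
  | t :: ts, n => tltRT X t n :: tltRL X ts (n + deg t)
end

/-- The X-tilting map. -/
def tlt (X : ℕ → Prop) [DecidablePred X] (T : PreTerm σ) : PreTerm σ := tltT X T 1

/-- The X-reversed tilting map. -/
def tltR (X : ℕ → Prop) [DecidablePred X] (T : PreTerm σ) : PreTerm σ := tltRT X T 1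

/-- Fully tilted: tilted w.r.t. the set of all positive integers. -/
def FullyTilted (T : PreTerm σ) : Prop := tlt (fun n => 1 ≤ n) T = T

/-- {1}-tilted. -/
def tltOne (T : PreTerm σ) : PreTerm σ := tlt (fun n => n = 1) T

/-- Number of internal-node siblings of the node `i` lying weakly to its left
(including `i` itself). -/
def lb (T : PreTerm σ) (i : ℕ) : ℕ :=
  match nodeAddr T i with
  | some [] => 0
  | some p =>
      match subAt T p.dropLast with
      | some (.node _ l) =>
          ((l.take (p.getLast?.getD 0 + 1)).filter (fun t => !isLeaf t)).length
      | _ => 0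
  | none => 0

/-- Scope: number of (strict) internal-node descendants of the node `i`. -/
def sc (T : PreTerm σ) (i : ℕ) : ℕ :=
  match nodeAddr T i with
  | some p =>
      match subAt T p with
      | some S => deg S - 1
      | none => 0
  | none => 0

end EW
namespace EW

variable {σ : Signature}

/-- The signature Σ_ℕ := Σ ⊔ ℕ, where `n : ℕ` has arity `n`. -/
def sigN (σ : Signature) : Signature := ⟨σ.carrier ⊕ ℕ, Sum.elim σ.arity id⟩

/-- All decorations come from Σ (no ℕ-decoration). -/
def OnlyBase : PreTerm (sigN σ) → Prop
  | .leaf => True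
  | .node (Sum.inl _) l => ∀ t ∈ l, OnlyBase t
  | .node (Sum.inr _) _ => False
  decreasing_by
    have := List.sizeOf_lt_of_mem ‹_ ∈ _›
    have h : ∀ (s : (sigN σ).carrier) (l : List (PreTerm (sigN σ))),
        sizeOf l < sizeOf (PreTerm.node s l) := fun s l => by
      simp only [PreTerm.node.sizeOf_spec]
      omega
    exact lt_trans this (h _ _)

/-- The corolla on `s`: a single internal node with `arity s` leaves. -/
def corolla (s : σ.carrier) : PreTerm σ := .node s (List.replicate (σ.arity s) .leaf)

/-- Number of leaves (arity) of a term. -/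
def arT (T : PreTerm σ) : ℕ := ((addrs T).filter (fun p => !isNodeAt T p)).length

mutual
/-- Replace the leftmost leaf of the first term by the second term. -/
def graftLeft : PreTerm σ → PreTerm σ → PreTerm σ
  | .leaf, R => R
  | .node s l, R => .node s (graftLeftL l R)
def graftLeftL : List (PreTerm σ) → PreTerm σ → List (PreTerm σ)
  | [], _ => []
  | t :: ts, R => if arT t = 0 then t :: graftLeftL ts R else graftLeft t R :: ts
end

/-- `f↑(w)`: the forest of corollas `|w| · C(w 1) ⋯ C(w n)`. -/
def fUp (w : List σ.carrier) : PreTerm (sigN σ) :=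
  .node (Sum.inr w.length) (w.map (fun s => corolla (σ := sigN σ) (Sum.inl s)))

/-- `f↓(w)`: iteratively graft the corollas of the letters of `w` onto the
leftmost leaf, starting from the corolla of `|w|`. -/
def fDown (w : List σ.carrier) : PreTerm (sigN σ) :=
  w.foldl (fun F s => graftLeft F (corolla (σ := sigN σ) (Sum.inl s)))
    (corolla (σ := sigN σ) (Sum.inr w.length))

/-- Σ-forest: a Σ_ℕ-term `n · T₁ ⋯ T_n` with the `Tᵢ`'s Σ-terms. -/
def IsForest (F : PreTerm (sigN σ)) : Prop :=
  WF F ∧ ∃ n l, F = .node (Sum.inr n) l ∧ ∀ t ∈ l, OnlyBase t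

/-- Size of a balanced forest: its degree minus one. -/
def fsize (F : PreTerm (sigN σ)) : ℕ := deg F - 1

/-- Balanced Σ-forest: `deg F = n + 1` where `n` decorates the root. -/
def IsBalanced (F : PreTerm (sigN σ)) : Prop :=
  IsForest F ∧ ∃ n l, F = .node (Sum.inr n) l ∧ deg F = n + 1

/-- Leaning Σ-forest: balanced and {1}-tilted. -/
def IsLeaning (F : PreTerm (sigN σ)) : Prop := IsBalanced F ∧ tltOne F = F

/-- Concatenation of forests. -/
def fconc : PreTerm (sigN σ) → PreTerm (sigN σ) → PreTerm (sigN σ)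
  | .node (Sum.inr n) l, .node (Sum.inr n') l' => .node (Sum.inr (n + n')) (l ++ l')
  | F, _ => F

/-- The over operation on leaning forests. -/
def overF (F₁ F₂ : PreTerm (sigN σ)) : PreTerm (sigN σ) := tltOne (fconc F₁ F₂)

/-- Number of extreme leaves: leaves visited after every internal node. -/
def extremeCount (T : PreTerm σ) : ℕ :=
  (((addrs T).map (fun p => !isNodeAt T p)).reverse.takeWhile id).length

mutual
/-- Graft the terms of the second argument (listed from the rightmost extreme
leaf to the leftmost) onto the extreme leaves of the first argument, from the
right. Returns the new term, the unused grafts and whether everything seen so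
far is still in the extreme zone. -/
def gET : PreTerm σ → List (PreTerm σ) → PreTerm σ × List (PreTerm σ) × Bool
  | .leaf, ts =>
      match ts with
      | [] => (.leaf, [], true)
      | g :: gs => (g, gs, true)
  | .node s l, ts =>
      let r := gEL l ts
      (.node s r.1, r.2.1, false)
def gEL : List (PreTerm σ) → List (PreTerm σ) → List (PreTerm σ) × List (PreTerm σ) × Bool
  | [], ts => ([], ts, true)
  | t :: us, ts =>
      let r := gEL us ts
      if r.2.2 then
        let a := gET t r.2.1
        (a.1 :: r.1, a.2.1, a.2.2)
      else (t :: r.1, r.2.1, false)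
end

def childrenOf : PreTerm (sigN σ) → List (PreTerm (sigN σ))
  | .node _ l => l
  | .leaf => []

/-- The under operation on leaning forests: graft the root subterms of
`F₂ ⌢ C(r)` onto the extreme leaves of `F₁ ⌢ C(n₂)`. -/
def under (F₁ F₂ : PreTerm (sigN σ)) : PreTerm (sigN σ) :=
  (gET (fconc F₁ (corolla (σ := sigN σ) (Sum.inr (fsize F₂))))
    (List.replicate (extremeCount F₁) PreTerm.leaf ++ (childrenOf F₂).reverse)).1

mutual
/-- Restriction machinery: keep only the internal nodes whose preorder index
satisfies `K`; kept nodes whose parent is removed float to the root. Returns,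
for a subterm, the in-place result (a leaf if the root of the subterm is
removed) together with the list of floated subtrees. -/
def restT (K : ℕ → Bool) : PreTerm (sigN σ) → ℕ → PreTerm (sigN σ) × List (PreTerm (sigN σ))
  | .leaf, _ => (.leaf, [])
  | .node s l, n =>
      let r := restL K l (n+1)
      if K n then (.node s (r.map Prod.fst), (r.map Prod.snd).flatten)
      else (.leaf, (r.map (fun a => (if isLeaf a.1 then [] else [a.1]) ++ a.2)).flatten)
def restL (K : ℕ → Bool) :
    List (PreTerm (sigN σ)) → ℕ → List (PreTerm (sigN σ) × List (PreTerm (sigN σ)))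
  | [], _ => []
  | t :: ts, n => restT K t n :: restL K ts (n + deg t)
end

def sumDeg (l : List (PreTerm σ)) : ℕ := (l.map deg).sum

/-- Restriction of a leaning forest to a set `I` of indices: keep the root and
the internal nodes `{i + 1 : i ∈ I}`, together with their adjacent edges;
the root gets decoration `#I` and is padded by leaves on the right. -/
def restrict (F : PreTerm (sigN σ)) (I : Finset ℕ) : PreTerm (sigN σ) :=
  match F with
  | .node (Sum.inr _) l =>
      let r := restL (fun i => decide (i - 1 ∈ I ∧ 2 ≤ i)) l 2
      let cs := (r.map (fun a => (if isLeaf a.1 then [] else [a.1]) ++ a.2)).flatten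
      .node (Sum.inr I.card) (cs ++ List.replicate (I.card - sumDeg cs) .leaf)
  | F => F

/-- k-top restriction. -/
def topRes (k : ℕ) (F : PreTerm (sigN σ)) : PreTerm (sigN σ) := restrict F (Finset.Icc 1 k)

/-- k-bottom restriction. -/
def botRes (k : ℕ) (F : PreTerm (sigN σ)) : PreTerm (sigN σ) :=
  restrict F (Finset.Icc (k+1) (fsize F))

end EW
namespace EW

/-- The signature ℕ where `arity n = n`. -/
def natSig : Signature := ⟨ℕ, id⟩

/-- `f↑` for words on the signature ℕ. -/
def fUpN (w : List ℕ) : PreTerm natSig :=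
  .node w.length (w.map (corolla (σ := natSig)))

/-- `f↓` for words on the signature ℕ. -/
def fDownN (w : List ℕ) : PreTerm natSig :=
  w.foldl (fun F s => graftLeft F (corolla (σ := natSig) s))
    (corolla (σ := natSig) w.length)

/-- The word `dw n = (n-1, n-2, …, 0)`. -/
def dwWord (n : ℕ) : List ℕ := (List.range n).reverse

/-- The minimum `dt n := n · C(n-1) ⋯ C(0)` of the rooted tree easterly wind
poset of order `n`. -/
def dt (n : ℕ) : PreTerm natSig := fUpN (dwWord n)

/-- Rooted trees. -/
inductive RTree where
  | node : List RTree → RTree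

mutual
/-- Size (number of nodes) of a rooted tree. -/
def rsize : RTree → ℕ
  | .node l => 1 + rsizeL l
def rsizeL : List RTree → ℕ
  | [] => 0
  | t :: ts => rsize t + rsizeL ts
end

mutual
/-- Scope sequence of a rooted tree: number of descendants of each node, in
preorder. -/
def scL : RTree → List ℕ
  | .node l => rsizeL l :: scLL l
def scLL : List RTree → List ℕ
  | [] => []
  | t :: ts => scL t ++ scLL ts
end

/-- The Tamari order on rooted trees (Knuth's realization): componentwise
comparison of scope sequences. -/
def tamLE (R₁ R₂ : RTree) : Prop :=
  rsize R₁ = rsize R₂ ∧ ∀ i, (scL R₁).getD i 0 ≤ (scL R₂).getD i 0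

mutual
/-- Underlying rooted tree of a term: delete the leaves and forget the
decorations. -/
def rt {σ : Signature} : PreTerm σ → RTree
  | .leaf => .node []
  | .node _ l => .node (rtL l)
def rtL {σ : Signature} : List (PreTerm σ) → List RTree
  | [] => []
  | .leaf :: ts => rtL ts
  | .node _ l :: ts => .node (rtL l) :: rtL ts
end

end EW



namespace EW

variable {σ : Signature}

open List

/-- Children address blocks. -/
def chAddrs (f : PreTerm σ → List (List ℕ)) : List (PreTerm σ) → ℕ → List (List ℕ)
  | [], _ => []
  | t :: ts, j => (f t).map (j :: ·) ++ chAddrs f ts (j+1)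

lemma enum_flatten_eq_chAddrs (f : PreTerm σ → List (List ℕ)) :
    ∀ (l : List (PreTerm σ)) (j : ℕ),
      (((l.map f).zipIdx j).map (fun jp => jp.1.map (jp.2 :: ·))).flatten = chAddrs f l j := by
  intro l
  induction l with
  | nil => intro j; simp [chAddrs]
  | cons t ts ih => intro j; simp [chAddrs, zipIdx_cons, ih]

lemma addrs_node (s : σ.carrier) (l : List (PreTerm σ)) :
    addrs (.node s l) = [] :: chAddrs addrs l 0 := by
  rw [addrs]
  congr 1
  have : l.attach.map (fun t => addrs t.1) = l.map addrs := List.attach_map_val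
  rw [this, ← enum_flatten_eq_chAddrs addrs l 0]

lemma mem_chAddrs {f : PreTerm σ → List (List ℕ)} {l : List (PreTerm σ)} {j : ℕ} {q : List ℕ} :
    q ∈ chAddrs f l j ↔ ∃ k t p, l[k]? = some t ∧ p ∈ f t ∧ q = (j+k) :: p := by
  induction l generalizing j with
  | nil => simp [chAddrs]
  | cons t ts ih =>
    simp only [chAddrs, mem_append, mem_map, ih]
    constructor
    · rintro (⟨p, hp, rfl⟩ | ⟨k, u, p, hk, hp, rfl⟩)
      · exact ⟨0, t, p, by simp, hp, by simp⟩
      · exact ⟨k+1, u, p, by simpa using hk, hp, by ring_nf⟩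
    · rintro ⟨k, u, p, hk, hp, rfl⟩
      cases k with
      | zero =>
        left
        obtain rfl : t = u := by simpa using hk
        exact ⟨p, hp, by simp⟩
      | succ k => right; exact ⟨k, u, p, by simpa using hk, hp, by ring_nf⟩


namespace PreTerm
lemma strongInd {σ : Signature} {P : PreTerm σ → Prop} (hleaf : P .leaf)
    (hnode : ∀ s l, (∀ t ∈ l, P t) → P (.node s l)) : ∀ T, P T := by
  intro T
  induction T using PreTerm.rec (motive_2 := fun l => ∀ t ∈ l, P t) with
  | leaf => exact hleaf
  | node s l ih => exact hnode s l ih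
  | nil => rename_i u hu; cases hu
  | cons t ts iht ihts =>
    rename_i u hu
    rcases (List.mem_cons.1 hu) with rfl | hu
    · exact iht
    · exact ihts u hu
end PreTerm

lemma subAt_append (T : PreTerm σ) (p q : List ℕ) :
    subAt T (p ++ q) = (subAt T p).bind (fun U => subAt U q) := by
  induction p generalizing T with
  | nil => simp [subAt]
  | cons j p' ih =>
    cases T with
    | leaf => simp [subAt]
    | node s l =>
      simp only [cons_append, subAt]
      cases h : l[j]? with
      | none => simp
      | some t => simp [ih]

lemma mem_addrs_of_isSome {T : PreTerm σ} {p : List ℕ} (h : (subAt T p).isSome) :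
    p ∈ addrs T := by
  induction p generalizing T with
  | nil =>
    cases T with
    | leaf => simp [addrs]
    | node s l => rw [addrs_node]; simp
  | cons j p' ih =>
    cases T with
    | leaf => simp [subAt] at h
    | node s l =>
      rw [addrs_node]
      simp only [subAt] at h
      cases hk : l[j]? with
      | none => rw [hk] at h; simp at h
      | some t =>
        rw [hk] at h
        right
        exact mem_chAddrs.2 ⟨j, t, p', hk, ih h, by simp⟩

lemma isSome_of_mem_addrs : ∀ {T : PreTerm σ} {p : List ℕ}, p ∈ addrs T →
    (subAt T p).isSome := by
  have : ∀ T : PreTerm σ, ∀ p, p ∈ addrs T → (subAt T p).isSome := by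
    refine PreTerm.strongInd ?_ ?_
    · intro p hp
      simp only [addrs] at hp
      simp at hp
      simp [hp, subAt]
    · intro s l ih p hp
      rw [addrs_node] at hp
      rcases List.mem_cons.1 hp with rfl | hp
      · simp [subAt]
      · obtain ⟨k, t, p', hk, hp', rfl⟩ := mem_chAddrs.1 hp
        simp only [Nat.zero_add, subAt, hk]
        exact ih t (List.mem_of_getElem? hk) p' hp'
  exact fun {T p} h => this T p h

lemma mem_addrs_iff {T : PreTerm σ} {p : List ℕ} :
    p ∈ addrs T ↔ (subAt T p).isSome :=
  ⟨isSome_of_mem_addrs, mem_addrs_of_isSome⟩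

abbrev LexLt (p q : List ℕ) : Prop := List.Lex (· < ·) p q

lemma lexLt_irrefl : ∀ (l : List ℕ), ¬ LexLt l l := by
  intro l h
  induction l with
  | nil => cases h
  | cons a l ih =>
    cases h with
    | cons h => exact ih h
    | rel h => exact lt_irrefl _ h

lemma lexLt_asymm : ∀ {p q : List ℕ}, LexLt p q → LexLt q p → False := by
  intro p
  induction p with
  | nil => intro q h h'; cases h'
  | cons a p ih =>
    intro q h h'
    cases h with
    | cons h =>
      cases h' with
      | cons h' => exact ih h h'
      | rel h' => exact lt_irrefl _ h'
    | rel h =>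
      cases h' with
      | cons h' => exact lt_irrefl _ h
      | rel h' => exact lt_irrefl _ (h.trans h')

lemma lexLt_of_prefix : ∀ {p q : List ℕ}, p <+: q → p ≠ q → LexLt p q := by
  intro p
  induction p with
  | nil =>
    intro q _ hne
    cases q with
    | nil => exact absurd rfl hne
    | cons b q => exact List.Lex.nil
  | cons a p ih =>
    intro q hpre hne
    obtain ⟨r, hr⟩ := hpre
    cases q with
    | nil => simp at hr
    | cons b q =>
      simp only [List.cons_append, List.cons.injEq] at hr
      obtain ⟨rfl, hr⟩ := hr
      exact List.Lex.cons (ih ⟨r, hr⟩ (by rintro rfl; exact hne (by simp_all)))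

lemma not_lexLt_of_prefix {p q : List ℕ} (h : p <+: q) : ¬ LexLt q p := by
  intro hl
  rcases eq_or_ne p q with rfl | hne
  · exact lexLt_irrefl _ hl
  · exact lexLt_asymm (lexLt_of_prefix h hne) hl

lemma prefix_sandwich : ∀ {p q₁ q₂ : List ℕ}, p <+: q₂ → LexLt p q₁ → LexLt q₁ q₂ →
    p <+: q₁ := by
  intro p
  induction p with
  | nil => intro q₁ q₂ _ _ _; exact List.nil_prefix
  | cons a p ih =>
    intro q₁ q₂ h2 l1 l12
    obtain ⟨r, hr⟩ := h2
    cases q₂ with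
    | nil => simp at hr
    | cons b q₂ =>
      simp only [List.cons_append, List.cons.injEq] at hr
      obtain ⟨rfl, hr⟩ := hr
      cases l1 with
      | rel hab =>
        cases l12 with
        | cons h' => exact absurd hab (lt_irrefl _)
        | rel h' => exact absurd h' (lt_asymm hab)
      | cons hl =>
        cases l12 with
        | cons h' => exact List.cons_prefix_cons.2 ⟨rfl, ih ⟨r, hr⟩ hl h'⟩
        | rel h' => exact absurd h' (lt_irrefl _)

lemma lexLt_append_last : ∀ (r : List ℕ) (a b : ℕ), LexLt (r ++ [a]) (r ++ [b]) ↔ a < b := by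
  intro r a b
  induction r with
  | nil =>
    constructor
    · intro h; cases h with
      | rel h => exact h
      | cons h => cases h
    · intro h; exact List.Lex.rel h
  | cons c r ih =>
    constructor
    · intro h
      cases h with
      | cons h => exact ih.1 h
      | rel h => exact absurd h (lt_irrefl _)
    · intro h; exact List.Lex.cons (ih.2 h)

lemma chAddrs_head {f : PreTerm σ → List (List ℕ)} {l : List (PreTerm σ)} {j : ℕ}
    {q : List ℕ} (h : q ∈ chAddrs f l j) : ∃ k p, j ≤ k ∧ q = k :: p := by
  obtain ⟨k, t, p, _, _, rfl⟩ := mem_chAddrs.1 h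
  exact ⟨j + k, p, Nat.le_add_right _ _, rfl⟩

lemma pairwise_chAddrs {f : PreTerm σ → List (List ℕ)} :
    ∀ (l : List (PreTerm σ)) (j : ℕ), (∀ t ∈ l, (f t).Pairwise LexLt) →
      (chAddrs f l j).Pairwise LexLt := by
  intro l
  induction l with
  | nil => intro j _; simp [chAddrs]
  | cons t ts ih =>
    intro j hall
    simp only [chAddrs]
    rw [List.pairwise_append]
    refine ⟨List.pairwise_map.2 ((hall t (by simp)).imp (fun h => List.Lex.cons h)),
      ih (j+1) (fun u hu => hall u (by simp [hu])), ?_⟩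
    intro q1 h1 q2 h2
    obtain ⟨p, _, rfl⟩ := List.mem_map.1 h1
    obtain ⟨k, p', hk, rfl⟩ := chAddrs_head h2
    exact List.Lex.rel (by omega)

lemma pairwise_addrs : ∀ (T : PreTerm σ), (addrs T).Pairwise LexLt := by
  refine PreTerm.strongInd ?_ ?_
  · simp [addrs]
  · intro s l ih
    rw [addrs_node]
    apply List.Pairwise.cons
    · intro q hq
      obtain ⟨k, p, _, rfl⟩ := chAddrs_head hq
      exact List.Lex.nil
    · exact pairwise_chAddrs l 0 (fun t ht => ih t ht)

lemma pairwise_nodeAddrs (T : PreTerm σ) : (nodeAddrs T).Pairwise LexLt :=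
  List.Pairwise.sublist List.filter_sublist (pairwise_addrs T)

lemma gen0 {α : Type*} (L : List α) (P : α → Bool)
    (hcl : ∀ k₁ k₂ (_ : k₁ < L.length) (_ : k₂ < L.length), k₁ ≤ k₂ → P L[k₂] = true →
      P L[k₁] = true) :
    ∀ k (h : k < L.length), (P L[k] = true ↔ k < L.countP P) := by
  induction L with
  | nil => intro k h; simp at h
  | cons x L ih =>
    intro k h
    by_cases hx : P x = true
    · rw [List.countP_cons, if_pos hx]
      cases k with
      | zero => simpa using hx
      | succ k =>
        have hk : k < L.length := by simpa using h
        have := ih (fun k₁ k₂ h₁ h₂ hle hp =>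
          hcl (k₁+1) (k₂+1) (by simpa using h₁) (by simpa using h₂) (by omega) (by simpa using hp))
          k hk
        simpa using this
    · have hall : ∀ k (h : k < (x :: L).length), ¬ P (x :: L)[k] = true := by
        intro k hk hp
        exact hx (hcl 0 k (by simp) hk (by omega) hp)
      have hc : (x :: L).countP P = 0 :=
        List.countP_eq_zero.2 (fun a ha => by
          obtain ⟨m, hm, rfl⟩ := List.mem_iff_getElem.1 ha
          exact hall m hm)
      rw [hc]
      simp [hall k h]

lemma block_positions (L : List (List ℕ)) (hP : L.Pairwise LexLt) {i : ℕ} {p : List ℕ}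
    (hi : L[i]? = some p) (k : ℕ) :
    (∃ q, L[k]? = some q ∧ p <+: q) ↔
      (i ≤ k ∧ k < i + L.countP (fun q => decide (p <+: q))) := by
  have hilen : i < L.length := by
    by_contra h
    rw [List.getElem?_eq_none (by omega)] at hi
    simp at hi
  have hip : L[i] = p := by
    exact Option.some.inj ((List.getElem?_eq_getElem hilen).symm.trans hi)
  have hpw := List.pairwise_iff_getElem.1 hP
  -- (1): prefix positions are ≥ i
  have h1 : ∀ k (h : k < L.length), p <+: L[k] → i ≤ k := by
    intro k hk hpre
    by_contra hlt
    exact not_lexLt_of_prefix hpre (hip ▸ hpw k i hk hilen (by omega))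
  -- (2): closure
  have h2 : ∀ k₁ k₂ (h₁ : k₁ < L.length) (h₂ : k₂ < L.length), i ≤ k₁ → k₁ ≤ k₂ →
      p <+: L[k₂] → p <+: L[k₁] := by
    intro k₁ k₂ h₁ h₂ hik hkk hpre
    rcases eq_or_lt_of_le hik with rfl | hik
    · exact hip ▸ List.prefix_refl p
    · rcases eq_or_lt_of_le hkk with rfl | hkk
      · exact hpre
      · exact prefix_sandwich hpre (hip ▸ hpw i k₁ hilen h₁ hik) (hpw k₁ k₂ h₁ h₂ hkk)
  set Pb : List ℕ → Bool := fun q => decide (p <+: q) with hPb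
  set D := L.drop i with hD
  have hDlen : D.length = L.length - i := by simp [hD]
  have hDget : ∀ k (h : k < D.length), D[k] = L[i+k]'(by omega) := by
    intro k hk; simp [hD, List.getElem_drop]
  have hclD : ∀ k₁ k₂ (_ : k₁ < D.length) (_ : k₂ < D.length), k₁ ≤ k₂ → Pb D[k₂] = true →
      Pb D[k₁] = true := by
    intro k₁ k₂ h₁ h₂ hle hp
    rw [hDget k₂ h₂] at hp
    rw [hDget k₁ h₁]
    simp only [hPb, decide_eq_true_eq] at hp ⊢
    exact h2 (i+k₁) (i+k₂) (by omega) (by omega) (by omega) (by omega) hp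
  have htake0 : (L.take i).countP Pb = 0 := by
    apply List.countP_eq_zero.2
    intro a ha hp
    obtain ⟨m, hm, rfl⟩ := List.mem_iff_getElem.1 ha
    have hmi : m < i := by
      have := hm
      simp only [List.length_take] at this
      omega
    have : (List.take i L)[m] = L[m]'(by simp at hm; omega) := List.getElem_take
    rw [this] at hp
    simp only [hPb, decide_eq_true_eq] at hp
    have := h1 m (by simp at hm; omega) hp
    omega
  have hcount : D.countP Pb = L.countP Pb := by
    conv_rhs => rw [← List.take_append_drop i L]
    rw [List.countP_append, htake0, Nat.zero_add]
  constructor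
  · rintro ⟨q, hq, hpre⟩
    have hklen : k < L.length := by
      by_contra h
      rw [List.getElem?_eq_none (by omega)] at hq
      simp at hq
    have hkq : L[k] = q := by
      exact Option.some.inj ((List.getElem?_eq_getElem hklen).symm.trans hq)
    have hik : i ≤ k := h1 k hklen (hkq ▸ hpre)
    refine ⟨hik, ?_⟩
    have hkD : k - i < D.length := by omega
    have := (gen0 D Pb hclD (k-i) hkD).1 (by
      rw [hDget (k-i) hkD]
      simp only [hPb, decide_eq_true_eq]
      have heq : i + (k - i) = k := by omega
      simp only [heq]
      exact hkq ▸ hpre)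
    rw [hcount] at this
    omega
  · rintro ⟨hik, hkc⟩
    have hkD : k - i < D.countP Pb := by rw [hcount]; omega
    have hkD' : k - i < D.length := lt_of_lt_of_le hkD List.countP_le_length
    have hp := (gen0 D Pb hclD (k-i) hkD').2 hkD
    rw [hDget (k-i) hkD'] at hp
    simp only [hPb, decide_eq_true_eq] at hp
    have hklen : i + (k - i) < L.length := by omega
    refine ⟨L[k]'(by omega), List.getElem?_eq_getElem (by omega), ?_⟩
    have heq : i + (k - i) = k := by omega
    have h3 : L[i + (k-i)]'hklen = L[k]'(by omega) := by
      apply Option.some.inj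
      rw [← List.getElem?_eq_getElem, ← List.getElem?_eq_getElem, heq]
    exact h3 ▸ hp

lemma isNodeAt_iff {T : PreTerm σ} {p : List ℕ} :
    isNodeAt T p = true ↔ ∃ s l, subAt T p = some (.node s l) := by
  unfold isNodeAt
  cases h : subAt T p with
  | none => simp
  | some U =>
    cases U with
    | leaf => simp
    | node s l => simp

lemma mem_nodeAddrs_iff {T : PreTerm σ} {q : List ℕ} :
    q ∈ nodeAddrs T ↔ ∃ s l, subAt T q = some (.node s l) := by
  unfold nodeAddrs
  rw [List.mem_filter, mem_addrs_iff, ← isNodeAt_iff]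
  constructor
  · exact fun h => h.2
  · intro h
    refine ⟨?_, h⟩
    obtain ⟨s, l, hs⟩ := isNodeAt_iff.1 h
    simp [hs]

lemma nodup_nodeAddrs (T : PreTerm σ) : (nodeAddrs T).Nodup :=
  (pairwise_nodeAddrs T).imp (fun h => by rintro rfl; exact lexLt_irrefl _ h)

lemma countP_prefix_eq_deg {T : PreTerm σ} {p : List ℕ} {S : PreTerm σ}
    (hS : subAt T p = some S) (hnode : ∃ s l, S = PreTerm.node s l) :
    (nodeAddrs T).countP (fun q => decide (p <+: q)) = deg S := by
  rw [List.countP_eq_length_filter]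
  set A := (nodeAddrs T).filter (fun q => decide (p <+: q)) with hA
  set B := (nodeAddrs S).map (p ++ ·) with hB
  have memA : ∀ q, q ∈ A ↔ (q ∈ nodeAddrs T ∧ p <+: q) := by
    intro q; rw [hA, List.mem_filter]; simp
  have memB : ∀ q, q ∈ B ↔ ∃ r, r ∈ nodeAddrs S ∧ q = p ++ r := by
    intro q; rw [hB, List.mem_map]; constructor
    · rintro ⟨r, hr, rfl⟩; exact ⟨r, hr, rfl⟩
    · rintro ⟨r, hr, rfl⟩; exact ⟨r, hr, rfl⟩
  have hAB : ∀ q, q ∈ A ↔ q ∈ B := by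
    intro q
    rw [memA, memB]
    constructor
    · rintro ⟨hq, r, rfl⟩
      refine ⟨r, ?_, rfl⟩
      rw [mem_nodeAddrs_iff] at hq ⊢
      rwa [subAt_append, hS, Option.bind_some] at hq
    · rintro ⟨r, hr, rfl⟩
      constructor
      · rw [mem_nodeAddrs_iff] at hr ⊢
        rwa [subAt_append, hS, Option.bind_some]
      · exact ⟨r, rfl⟩
  have nodA : A.Nodup := (nodup_nodeAddrs T).filter _
  have nodB : B.Nodup := (nodup_nodeAddrs S).map (fun a b h => List.append_cancel_left h)
  have perm : A.Perm B :=
    (List.subperm_of_subset nodA (fun q hq => (hAB q).1 hq)).antisymm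
      (List.subperm_of_subset nodB (fun q hq => (hAB q).2 hq))
  rw [perm.length_eq]
  simp [hB, deg]

lemma block (T : PreTerm σ) {i : ℕ} {p : List ℕ} (hi : (nodeAddrs T)[i]? = some p) :
    ∃ S, subAt T p = some S ∧ (∃ s l, S = PreTerm.node s l) ∧
      ∀ k, (∃ q, (nodeAddrs T)[k]? = some q ∧ p <+: q) ↔ (i ≤ k ∧ k < i + deg S) := by
  have hp : p ∈ nodeAddrs T := List.mem_of_getElem? hi
  obtain ⟨s, l, hS⟩ := mem_nodeAddrs_iff.1 hp
  refine ⟨.node s l, hS, ⟨s, l, rfl⟩, ?_⟩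
  intro k
  rw [block_positions (nodeAddrs T) (pairwise_nodeAddrs T) hi k,
    countP_prefix_eq_deg hS ⟨s, l, rfl⟩]

lemma deg_def (T : PreTerm σ) : deg T = (nodeAddrs T).length := rfl

lemma nodeAddr_def (T : PreTerm σ) (i : ℕ) : nodeAddr T i = (nodeAddrs T)[i-1]? := rfl

lemma subAt_nil (T : PreTerm σ) : subAt T [] = some T := by simp [subAt]

lemma sc_eq {T : PreTerm σ} {i : ℕ} {p : List ℕ} {S : PreTerm σ}
    (h1 : nodeAddr T i = some p) (h2 : subAt T p = some S) : sc T i = deg S - 1 := by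
  simp [sc, h1, h2]

lemma beq_bridge (a b : List ℕ) : (a == b) = (decide (a = b)) := by
  by_cases h : a = b <;> simp [h]

lemma indexOf_bridge (q : List ℕ) (L : List (List ℕ)) :
    L.idxOf q = @List.idxOf _ instBEqOfDecidableEq q L := by
  unfold List.idxOf
  congr 1
  funext x
  exact beq_bridge x q

lemma nodeAddr_exists {T : PreTerm σ} {i : ℕ} (h1 : 1 ≤ i) (h2 : i ≤ deg T) :
    ∃ p, nodeAddr T i = some p := by
  rw [nodeAddr_def]
  have : i - 1 < (nodeAddrs T).length := by rw [← deg_def]; omega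
  exact ⟨_, List.getElem?_eq_getElem this⟩

lemma idx_lt_of_lexLt {L : List (List ℕ)} (hP : L.Pairwise LexLt) {k₁ k₂ : ℕ}
    (h₁ : k₁ < L.length) (h₂ : k₂ < L.length) (h : LexLt (L[k₁]'h₁) (L[k₂]'h₂)) : k₁ < k₂ := by
  have hpw := List.pairwise_iff_getElem.1 hP
  rcases lt_trichotomy k₁ k₂ with hlt | rfl | hgt
  · exact hlt
  · exact absurd h (lexLt_irrefl _)
  · exact absurd (hpw k₂ k₁ h₂ h₁ hgt) (fun h' => lexLt_asymm h h')

lemma pos_eq_indexOf {L : List (List ℕ)} (hnd : L.Nodup) {k : ℕ} {q : List ℕ}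
    (hk : k < L.length) (hq : L[k]'hk = q) : L.idxOf q = k := by
  rw [indexOf_bridge]
  exact hq ▸ ((indexOf_bridge L[k] L).symm.trans (List.Nodup.idxOf_getElem hnd k hk))

lemma prefix_dropLast {r p : List ℕ} (h : r <+: p) (hlen : r.length < p.length) :
    r <+: p.dropLast := by
  have h1 : r = p.take r.length := List.prefix_iff_eq_take.1 h
  have h2 : p.dropLast = p.take (p.length - 1) := List.dropLast_eq_take
  rw [h2, h1]
  have : r.length ≤ p.length - 1 := by omega
  rw [show p.take r.length = (p.take (p.length - 1)).take r.length by
    rw [List.take_take, min_eq_left this]]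
  exact List.take_prefix _ _

/-- The descendants interval lemma at the level of 1-based indices. -/
lemma desc_iff {T : PreTerm σ} {i k : ℕ} {pi pk : List ℕ}
    (hi : nodeAddr T i = some pi) (hk : nodeAddr T k = some pk)
    (h1i : 1 ≤ i) (h1k : 1 ≤ k) :
    pi <+: pk ↔ (i ≤ k ∧ k ≤ i + sc T i) := by
  rw [nodeAddr_def] at hi hk
  obtain ⟨S, hS, ⟨s, l, rfl⟩, hblk⟩ := block T hi
  have hdegpos : 1 ≤ deg (PreTerm.node s l) := by
    rw [deg_def]
    unfold nodeAddrs
    rw [addrs_node, List.filter_cons]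
    rw [if_pos (isNodeAt_iff.2 ⟨s, l, subAt_nil _⟩)]
    simp
  have hsc : sc T i = deg (PreTerm.node s l) - 1 := sc_eq (by rw [nodeAddr_def]; exact hi) hS
  have := hblk (k-1)
  constructor
  · intro hpre
    have := this.1 ⟨pk, hk, hpre⟩
    omega
  · intro ⟨h1, h2⟩
    obtain ⟨q, hq, hpre⟩ := this.2 (by omega)
    rw [hk] at hq
    exact (Option.some.inj hq) ▸ hpre

lemma sc_bound {T : PreTerm σ} {i : ℕ} {pi : List ℕ}
    (hi : nodeAddr T i = some pi) (h1i : 1 ≤ i) : i + sc T i ≤ deg T := by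
  rw [nodeAddr_def] at hi
  obtain ⟨S, hS, ⟨s, l, rfl⟩, hblk⟩ := block T hi
  have hdegpos : 1 ≤ deg (PreTerm.node s l) := by
    rw [deg_def]
    unfold nodeAddrs
    rw [addrs_node, List.filter_cons]
    rw [if_pos (isNodeAt_iff.2 ⟨s, l, subAt_nil _⟩)]
    simp
  have hsc : sc T i = deg (PreTerm.node s l) - 1 := sc_eq (by rw [nodeAddr_def]; exact hi) hS
  obtain ⟨q, hq, _⟩ := (hblk (i - 1 + deg (PreTerm.node s l) - 1)).2 (by omega)
  have : i - 1 + deg (PreTerm.node s l) - 1 < (nodeAddrs T).length := by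
    by_contra hcon
    rw [List.getElem?_eq_none (by omega)] at hq
    simp at hq
  rw [← deg_def] at this
  omega

lemma nodeAddr_one_of_exists {T : PreTerm σ} {i : ℕ} {p : List ℕ}
    (hi : nodeAddr T i = some p) : nodeAddr T 1 = some [] := by
  rw [nodeAddr_def] at hi ⊢
  cases T with
  | leaf =>
    exfalso
    have : nodeAddrs (σ := σ) PreTerm.leaf = [] := by
      unfold nodeAddrs addrs
      simp [isNodeAt, subAt]
    rw [this] at hi
    simp at hi
  | node s l =>
    unfold nodeAddrs
    rw [addrs_node, List.filter_cons, if_pos (isNodeAt_iff.2 ⟨s, l, subAt_nil _⟩)]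
    simp

lemma eq_one_of_nodeAddr_nil {T : PreTerm σ} {i : ℕ}
    (hi : nodeAddr T i = some []) (h1 : 1 ≤ i) : i = 1 := by
  by_contra hne
  have h2 : 2 ≤ i := by omega
  have h0 := nodeAddr_one_of_exists hi
  rw [nodeAddr_def] at hi h0
  have hlen0 : 0 < (nodeAddrs T).length := by
    by_contra h
    rw [List.getElem?_eq_none (by omega)] at h0
    simp at h0
  have hleni : i - 1 < (nodeAddrs T).length := by
    by_contra h
    rw [List.getElem?_eq_none (by omega)] at hi
    simp at hi
  have e0 : (nodeAddrs T)[0]'hlen0 = [] := Option.some.inj ((List.getElem?_eq_getElem _).symm.trans h0)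
  have ei : (nodeAddrs T)[i-1]'hleni = [] := Option.some.inj ((List.getElem?_eq_getElem _).symm.trans hi)
  have := List.pairwise_iff_getElem.1 (pairwise_nodeAddrs T) 0 (i-1) hlen0 hleni (by omega)
  rw [e0, ei] at this
  exact lexLt_irrefl _ this

lemma nodeAddr_getElem {T : PreTerm σ} {i : ℕ} {p : List ℕ}
    (hi : nodeAddr T i = some p) :
    ∃ h : i - 1 < (nodeAddrs T).length, (nodeAddrs T)[i-1]'h = p := by
  rw [nodeAddr_def] at hi
  have hlt : i - 1 < (nodeAddrs T).length := by
    by_contra h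
    rw [List.getElem?_eq_none (by omega)] at hi
    simp at hi
  exact ⟨hlt, Option.some.inj ((List.getElem?_eq_getElem hlt).symm.trans hi)⟩

lemma mem_of_nodeAddr {T : PreTerm σ} {i : ℕ} {p : List ℕ}
    (hi : nodeAddr T i = some p) : p ∈ nodeAddrs T := by
  obtain ⟨h, hp⟩ := nodeAddr_getElem hi
  exact hp ▸ List.getElem_mem h

lemma parent_subAt {T : PreTerm σ} {p : List ℕ} {S : PreTerm σ} (hp : p ≠ [])
    (hS : subAt T p = some S) : ∃ s' l', subAt T p.dropLast = some (.node s' l') := by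
  have hdec := List.dropLast_append_getLast hp
  rw [← hdec, subAt_append] at hS
  cases hP : subAt T p.dropLast with
  | none => rw [hP] at hS; simp at hS
  | some P =>
    rw [hP] at hS
    simp only [Option.bind_some] at hS
    cases P with
    | leaf => simp [subAt] at hS
    | node s' l' => exact ⟨s', l', rfl⟩

lemma dropLast_mem_nodeAddrs {T : PreTerm σ} {p : List ℕ} (hp : p ≠ [])
    (hmem : p ∈ nodeAddrs T) : p.dropLast ∈ nodeAddrs T := by
  obtain ⟨s, l, hS⟩ := mem_nodeAddrs_iff.1 hmem
  obtain ⟨s', l', hP⟩ := parent_subAt hp hS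
  exact mem_nodeAddrs_iff.2 ⟨s', l', hP⟩

lemma paOf_eq {T : PreTerm σ} {i : ℕ} {p : List ℕ}
    (hi : nodeAddr T i = some p) (hp : p ≠ []) :
    paOf T i = nodeIdx T p.dropLast := by
  unfold paOf
  rw [hi]
  cases p with
  | nil => exact absurd rfl hp
  | cons a p' => rfl

lemma nodeIdx_def (T : PreTerm σ) (q : List ℕ) :
    nodeIdx T q = (nodeAddrs T).idxOf q + 1 := rfl

lemma nodeAddr_of_mem {T : PreTerm σ} {q : List ℕ} (h : q ∈ nodeAddrs T) :
    nodeAddr T (nodeIdx T q) = some q := by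
  rw [nodeAddr_def, nodeIdx_def]
  have hlt : (nodeAddrs T).idxOf q < (nodeAddrs T).length := by
    rw [indexOf_bridge]
    exact (indexOf_bridge q (nodeAddrs T)) ▸ List.idxOf_lt_length_iff.2 h
  have h2 : (nodeAddrs T).idxOf q + 1 - 1 = (nodeAddrs T).idxOf q := by omega
  rw [h2, indexOf_bridge]
  have hlt' : @List.idxOf _ instBEqOfDecidableEq q (nodeAddrs T) < (nodeAddrs T).length :=
    (indexOf_bridge q (nodeAddrs T)) ▸ List.idxOf_lt_length_iff.2 h
  rw [List.getElem?_eq_getElem hlt']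
  exact congrArg some (by simp only [← indexOf_bridge]; exact List.getElem_idxOf _)

lemma nodeIdx_eq_of_getElem {T : PreTerm σ} {k : ℕ} {q : List ℕ}
    (hk : k < (nodeAddrs T).length) (hq : (nodeAddrs T)[k]'hk = q) :
    nodeIdx T q = k + 1 := by
  rw [nodeIdx_def, pos_eq_indexOf (nodup_nodeAddrs T) hk hq]

lemma pa_spec {T : PreTerm σ} {i : ℕ} {p : List ℕ}
    (hi : nodeAddr T i = some p) (h1 : 1 ≤ i) (hp : p ≠ []) :
    1 ≤ paOf T i ∧ paOf T i < i ∧ nodeAddr T (paOf T i) = some p.dropLast ∧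
      i ≤ paOf T i + sc T (paOf T i) ∧ paOf T i ≤ deg T := by
  have hmem : p ∈ nodeAddrs T := mem_of_nodeAddr hi
  have hqmem : p.dropLast ∈ nodeAddrs T := dropLast_mem_nodeAddrs hp hmem
  have hpa := paOf_eq hi hp
  have hj : nodeAddr T (paOf T i) = some p.dropLast := by
    rw [hpa]; exact nodeAddr_of_mem hqmem
  have hpre : p.dropLast <+: p := List.dropLast_prefix p
  have hne : p.dropLast ≠ p := by
    intro h
    have h2 := congrArg List.length h
    rw [List.length_dropLast] at h2
    have h3 : p.length = 0 := by omega
    exact hp (List.length_eq_zero_iff.1 h3)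
  have h1pa : 1 ≤ paOf T i := by rw [hpa, nodeIdx_def]; omega
  have hdesc := (desc_iff hj hi h1pa h1).1 hpre
  have hjne : paOf T i ≠ i := by
    intro h
    rw [h, hi] at hj
    exact hne (Option.some.inj hj).symm
  have hjdeg : paOf T i ≤ deg T := by
    obtain ⟨hlt, _⟩ := nodeAddr_getElem hj
    rw [← deg_def] at hlt
    omega
  exact ⟨h1pa, by omega, hj, hdesc.2, hjdeg⟩

lemma pa_max {T : PreTerm σ} {i j : ℕ} {pi pj : List ℕ}
    (hi : nodeAddr T i = some pi) (hj : nodeAddr T j = some pj)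
    (h1i : 1 ≤ i) (h1j : 1 ≤ j) (hpre : pj <+: pi) (hne : pj ≠ pi) :
    j ≤ paOf T i := by
  have hpnil : pi ≠ [] := by
    rintro rfl
    exact hne (List.prefix_nil.1 hpre)
  have hlen : pj.length < pi.length := by
    rcases lt_or_eq_of_le (List.IsPrefix.length_le hpre) with h | h
    · exact h
    · exact absurd (List.IsPrefix.eq_of_length hpre h) hne
  have hpre' : pj <+: pi.dropLast := prefix_dropLast hpre (by omega)
  have hqmem : pi.dropLast ∈ nodeAddrs T := dropLast_mem_nodeAddrs hpnil (mem_of_nodeAddr hi)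
  have hpa := paOf_eq hi hpnil
  have hq : nodeAddr T (paOf T i) = some pi.dropLast := by
    rw [hpa]; exact nodeAddr_of_mem hqmem
  rcases eq_or_ne pj pi.dropLast with rfl | hne'
  · obtain ⟨hjlt, hjval⟩ := nodeAddr_getElem hj
    have := nodeIdx_eq_of_getElem hjlt hjval
    rw [hpa, this]
    omega
  · have hlex : LexLt pj pi.dropLast := lexLt_of_prefix hpre' hne'
    obtain ⟨hjlt, hjval⟩ := nodeAddr_getElem hj
    obtain ⟨hqlt, hqval⟩ := nodeAddr_getElem hq
    have hidx := idx_lt_of_lexLt (pairwise_nodeAddrs T) hjlt hqlt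
      (by rw [hjval, hqval]; exact hlex)
    obtain ⟨h1pa, _, _, _, _⟩ := pa_spec hi h1i hpnil
    omega

lemma chain {T : PreTerm σ} {i : ℕ} (h1i : 1 ≤ i) :
    ∀ m, (∀ k, i < k → k ≤ m → i ≤ paOf T k) → i < m → m ≤ deg T → m ≤ i + sc T i := by
  intro m
  induction m using Nat.strong_induction_on with
  | _ m ih =>
    intro hyp him hmdeg
    obtain ⟨pm, hm⟩ := nodeAddr_exists (by omega) hmdeg
    obtain ⟨pi, hi⟩ := nodeAddr_exists (T := T) h1i (by omega)
    have hpmnil : pm ≠ [] := by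
      rintro rfl
      have h1m : 1 ≤ m := by omega
      have hm1 : m = 1 := eq_one_of_nodeAddr_nil hm h1m
      omega
    obtain ⟨h1pa, hpalt, hpaddr, hpasc, hpadeg⟩ := pa_spec hm (by omega) hpmnil
    have hpam : i ≤ paOf T m := hyp m him (le_refl m)
    rcases eq_or_lt_of_le hpam with heq | hlt
    · -- paOf T m = i : pi = dropLast pm, so pi prefix of pm
      rw [← heq] at hpaddr
      have hpieq : pi = pm.dropLast := by
        rw [hi] at hpaddr
        exact Option.some.inj hpaddr
      have hpre : pi <+: pm := hpieq ▸ List.dropLast_prefix pm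
      have := (desc_iff hi hm h1i (by omega)).1 hpre
      omega
    · have hypk : ∀ k, i < k → k ≤ paOf T m → i ≤ paOf T k := by
        intro k hk1 hk2
        exact hyp k hk1 (by omega)
      have hscpa : paOf T m ≤ i + sc T i := ih (paOf T m) hpalt hypk hlt hpadeg
      have hpre1 : pi <+: pm.dropLast := by
        have h1pa' : 1 ≤ paOf T m := h1pa
        have h := (desc_iff hi hpaddr h1i h1pa').2 ⟨by omega, by omega⟩
        exact h
      have hpre2 : pi <+: pm := hpre1.trans (List.dropLast_prefix pm)
      have := (desc_iff hi hm h1i (by omega)).1 hpre2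
      omega

lemma filterMap_total_getElem? {α β : Type*} (f : α → Option β) :
    ∀ (l : List α), (∀ a ∈ l, (f a).isSome) → ∀ k : ℕ, (l.filterMap f)[k]? = (l[k]?).bind f := by
  intro l
  induction l with
  | nil => intro _ k; simp
  | cons x l ih =>
    intro htot k
    have hx : (f x).isSome := htot x (by simp)
    obtain ⟨b, hb⟩ := Option.isSome_iff_exists.1 hx
    rw [List.filterMap_cons_some hb]
    cases k with
    | zero => simp [hb]
    | succ k =>
      simp only [List.getElem?_cons_succ]
      exact ih (fun a ha => htot a (by simp [ha])) k

lemma decAt_eq {T : PreTerm σ} {p : List ℕ} {s : σ.carrier} {l : List (PreTerm σ)}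
    (hs : subAt T p = some (.node s l)) : decAt T p = some s := by
  unfold decAt
  rw [hs]

lemma dcWord_getElem? (T : PreTerm σ) (k : ℕ) :
    (dcWord T)[k]? = ((nodeAddrs T)[k]?).bind (decAt T) := by
  unfold dcWord
  apply filterMap_total_getElem?
  intro p hp
  obtain ⟨s, l, hs⟩ := mem_nodeAddrs_iff.1 hp
  rw [decAt_eq hs]
  simp

lemma arityOfNode_eq {T : PreTerm σ} {i : ℕ} {p : List ℕ} {s : σ.carrier}
    {l : List (PreTerm σ)} (hi : nodeAddr T i = some p)
    (hs : subAt T p = some (.node s l)) : arityOfNode T i = σ.arity s := by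
  simp [arityOfNode, hi, decAt_eq hs]

lemma arity_congr {T₁ T₂ : PreTerm σ} (hd : dcWord T₁ = dcWord T₂) {i : ℕ}
    {p₁ p₂ : List ℕ} (hi₁ : nodeAddr T₁ i = some p₁) (hi₂ : nodeAddr T₂ i = some p₂) :
    arityOfNode T₁ i = arityOfNode T₂ i := by
  obtain ⟨s₁, l₁, hs₁⟩ := mem_nodeAddrs_iff.1 (mem_of_nodeAddr hi₁)
  obtain ⟨s₂, l₂, hs₂⟩ := mem_nodeAddrs_iff.1 (mem_of_nodeAddr hi₂)
  have e₁ : (dcWord T₁)[i-1]? = some s₁ := by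
    rw [dcWord_getElem?, ← nodeAddr_def, hi₁, Option.bind_some, decAt_eq hs₁]
  have e₂ : (dcWord T₂)[i-1]? = some s₂ := by
    rw [dcWord_getElem?, ← nodeAddr_def, hi₂, Option.bind_some, decAt_eq hs₂]
  rw [hd] at e₁
  rw [e₂] at e₁
  have : s₂ = s₁ := Option.some.inj e₁
  rw [arityOfNode_eq hi₁ hs₁, arityOfNode_eq hi₂ hs₂, this]

lemma lpOf_root {T : PreTerm σ} {i : ℕ} (hi : nodeAddr T i = some []) : lpOf T i = 0 := by
  unfold lpOf
  rw [hi]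

lemma paOf_root {T : PreTerm σ} {i : ℕ} (hi : nodeAddr T i = some []) : paOf T i = 1 := by
  unfold paOf
  rw [hi]

lemma lpOf_eq {T : PreTerm σ} {i : ℕ} {q : List ℕ} {a : ℕ}
    (hi : nodeAddr T i = some (q ++ [a])) : lpOf T i = a + 1 := by
  unfold lpOf
  rw [hi]
  have h1 : (q ++ [a]) ≠ ([] : List ℕ) := by simp
  cases hq : q ++ [a] with
  | nil => exact absurd hq h1
  | cons b r =>
    rw [← hq]
    simp [List.getLast?_concat]

lemma wf_subAt {T : PreTerm σ} (hw : WF T) :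
    ∀ {p : List ℕ} {U : PreTerm σ}, subAt T p = some U → WF U := by
  intro p
  induction p generalizing T with
  | nil => intro U h; rw [subAt_nil] at h; exact (Option.some.inj h) ▸ hw
  | cons j p' ih =>
    intro U h
    cases T with
    | leaf => simp [subAt] at h
    | node s l =>
      simp only [subAt] at h
      cases hk : l[j]? with
      | none => rw [hk] at h; simp at h
      | some t =>
        rw [hk] at h
        simp only [WF] at hw
        exact ih (hw.2 t (List.mem_of_getElem? hk)) h

lemma lp_le_arity {T : PreTerm σ} (hw : WF T) {i : ℕ} {p : List ℕ}
    (hi : nodeAddr T i = some p) (h1 : 1 ≤ i) :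
    lpOf T i ≤ arityOfNode T (paOf T i) := by
  rcases eq_or_ne p [] with rfl | hp
  · rw [lpOf_root hi]; omega
  · obtain ⟨s, l, hs⟩ := mem_nodeAddrs_iff.1 (mem_of_nodeAddr hi)
    obtain ⟨s', l', hP⟩ := parent_subAt hp hs
    obtain ⟨_, _, hpaddr, _, _⟩ := pa_spec hi h1 hp
    have har : arityOfNode T (paOf T i) = σ.arity s' := arityOfNode_eq hpaddr hP
    have hdec := List.dropLast_append_getLast hp
    set a := p.getLast hp with ha
    have hi' : nodeAddr T i = some (p.dropLast ++ [a]) := by rw [hdec]; exact hi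
    have hlp : lpOf T i = a + 1 := lpOf_eq hi'
    -- a < l'.length
    have hsub : subAt T (p.dropLast ++ [a]) = some (.node s l) := by rw [hdec]; exact hs
    rw [subAt_append, hP, Option.bind_some] at hsub
    simp only [subAt] at hsub
    have halen : a < l'.length := by
      by_contra hcon
      rw [List.getElem?_eq_none (by omega)] at hsub
      simp at hsub
    have hwP : WF (PreTerm.node s' l') := wf_subAt hw hP
    simp only [WF] at hwP
    have : l'.length = σ.arity s' := hwP.1
    omega

lemma cnc_def (T : PreTerm σ) (i : ℕ) :
    cnc T i = (paOf T i : ℚ) + 1 -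
      (2 : ℚ) ^ ((lpOf T i : ℤ) - (arityOfNode T (paOf T i) : ℤ)) := rfl

lemma cnc_arith {p₁ p₂ l₁ l₂ a₁ a₂ : ℕ} (h₁ : l₁ ≤ a₁) (h₂ : l₂ ≤ a₂)
    (hae : p₁ = p₂ → a₁ = a₂) :
    ((p₁ : ℚ) + 1 - (2:ℚ) ^ ((l₁ : ℤ) - a₁) ≤ (p₂ : ℚ) + 1 - (2:ℚ) ^ ((l₂ : ℤ) - a₂)) ↔
      (p₁ < p₂ ∨ (p₁ = p₂ ∧ l₂ ≤ l₁)) := by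
  have hb1 : (0 : ℚ) < (2:ℚ) ^ ((l₁ : ℤ) - a₁) := zpow_pos (by norm_num) _
  have hb2 : (0 : ℚ) < (2:ℚ) ^ ((l₂ : ℤ) - a₂) := zpow_pos (by norm_num) _
  have hu1 : (2:ℚ) ^ ((l₁ : ℤ) - a₁) ≤ 1 := by
    rw [show (1:ℚ) = (2:ℚ) ^ (0:ℤ) by norm_num]
    exact zpow_le_zpow_right₀ (by norm_num) (by omega)
  have hu2 : (2:ℚ) ^ ((l₂ : ℤ) - a₂) ≤ 1 := by
    rw [show (1:ℚ) = (2:ℚ) ^ (0:ℤ) by norm_num]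
    exact zpow_le_zpow_right₀ (by norm_num) (by omega)
  rcases lt_trichotomy p₁ p₂ with hlt | heq | hgt
  · constructor
    · intro _; exact Or.inl hlt
    · intro _
      have : (p₁ : ℚ) + 1 ≤ (p₂ : ℚ) := by
        have : (p₁ : ℚ) < p₂ := by exact_mod_cast hlt
        have h2 : ((p₁ + 1 : ℕ) : ℚ) ≤ (p₂ : ℚ) := by exact_mod_cast hlt
        push_cast at h2
        linarith
      linarith
  · have ha : a₁ = a₂ := hae heq
    subst ha
    rw [heq]
    constructor
    · intro h
      refine Or.inr ⟨rfl, ?_⟩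
      have hle : (2:ℚ) ^ ((l₂ : ℤ) - a₁) ≤ (2:ℚ) ^ ((l₁ : ℤ) - a₁) := by linarith
      have : (l₂ : ℤ) - a₁ ≤ (l₁ : ℤ) - a₁ := by
        by_contra hcon
        push_neg at hcon
        have := zpow_lt_zpow_right₀ (by norm_num : (1:ℚ) < 2) hcon
        linarith
      omega
    · rintro (h | ⟨_, h⟩)
      · omega
      · have : (2:ℚ) ^ ((l₂ : ℤ) - a₁) ≤ (2:ℚ) ^ ((l₁ : ℤ) - a₁) :=
          zpow_le_zpow_right₀ (by norm_num) (by omega)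
        linarith
  · constructor
    · intro h
      exfalso
      have : (p₂ : ℚ) + 1 ≤ (p₁ : ℚ) := by
        have h2 : ((p₂ + 1 : ℕ) : ℚ) ≤ (p₁ : ℚ) := by exact_mod_cast hgt
        push_cast at h2
        linarith
      linarith
    · rintro (h | ⟨h, _⟩) <;> omega

/-- Fully tilted predicate, inductively. -/
inductive FTP : PreTerm σ → Prop
  | leaf : FTP .leaf
  | node (s : σ.carrier) (l : List (PreTerm σ)) (A B : List (PreTerm σ))
      (hAB : l = A ++ B) (hA : ∀ a ∈ A, isLeaf a = false) (hB : ∀ b ∈ B, b = .leaf)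
      (h : ∀ t ∈ l, FTP t) : FTP (.node s l)

lemma tltL_mem {X : ℕ → Prop} [DecidablePred X] :
    ∀ (l : List (PreTerm σ)) (m : ℕ), 1 ≤ m → ∀ t' ∈ tltL X l m,
      ∃ u m', u ∈ l ∧ 1 ≤ m' ∧ t' = tltT X u m' := by
  intro l
  induction l with
  | nil => intro m _ t' ht'; simp [tltL] at ht'
  | cons u us ih =>
    intro m hm t' ht'
    rw [tltL] at ht'
    rcases List.mem_cons.1 ht' with rfl | h
    · exact ⟨u, m, by simp, hm, rfl⟩
    · obtain ⟨u', m', hu', hm', rfl⟩ := ih (m + deg u) (by omega) t' h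
      exact ⟨u', m', by simp [hu'], hm', rfl⟩

lemma mem_of_mem_sortNodesFirst {l : List (PreTerm σ)} {t : PreTerm σ}
    (h : t ∈ sortNodesFirst l) : t ∈ l := by
  unfold sortNodesFirst at h
  rcases List.mem_append.1 h with h | h
  · exact (List.mem_filter.1 h).1
  · exact (List.mem_filter.1 h).1

lemma isLeaf_eq_leaf {t : PreTerm σ} (h : isLeaf t = true) : t = .leaf := by
  cases t with
  | leaf => rfl
  | node s l => simp [isLeaf] at h

lemma ftp_tltT {X : ℕ → Prop} [DecidablePred X] (hX : ∀ n, 1 ≤ n → X n) :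
    ∀ u : PreTerm σ, ∀ m, 1 ≤ m → FTP (tltT X u m) := by
  refine PreTerm.strongInd ?_ ?_
  · intro m _
    rw [tltT]
    exact FTP.leaf
  · intro s l ih m hm
    rw [tltT, if_pos (hX m hm)]
    set l' := tltL X l (m+1) with hl'
    refine FTP.node s _ (l'.filter (fun t => !isLeaf t)) (l'.filter (fun t => isLeaf t))
      rfl ?_ ?_ ?_
    · intro a ha
      have := (List.mem_filter.1 ha).2
      simpa using this
    · intro b hb
      exact isLeaf_eq_leaf (List.mem_filter.1 hb).2
    · intro t ht
      have ht' : t ∈ l' := mem_of_mem_sortNodesFirst ht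
      obtain ⟨u, m', hu, hm', rfl⟩ := tltL_mem l (m+1) (by omega) t ht'
      exact ih u hu m' hm'

lemma fullyTilted_ftp {T : PreTerm σ} (hf : FullyTilted T) : FTP T := by
  unfold FullyTilted tlt at hf
  rw [← hf]
  exact ftp_tltT (fun n h => h) T 1 (le_refl 1)

lemma ftp_subAt {T : PreTerm σ} (hf : FTP T) :
    ∀ {p : List ℕ} {U : PreTerm σ}, subAt T p = some U → FTP U := by
  intro p
  induction p generalizing T with
  | nil => intro U h; rw [subAt_nil] at h; exact (Option.some.inj h) ▸ hf
  | cons j p' ih =>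
    intro U h
    cases T with
    | leaf => simp [subAt] at h
    | node s l =>
      simp only [subAt] at h
      cases hk : l[j]? with
      | none => rw [hk] at h; simp at h
      | some t =>
        rw [hk] at h
        cases hf with
        | node s l A B hAB hA hB hall =>
          exact ih (hall t (List.mem_of_getElem? hk)) h

lemma ftp_children {s : σ.carrier} {l : List (PreTerm σ)} (hf : FTP (.node s l))
    {j : ℕ} {s₀ : σ.carrier} {l₀ : List (PreTerm σ)} (hj : l[j]? = some (.node s₀ l₀)) :
    ∀ m ≤ j, ∃ s₁ l₁, l[m]? = some (.node s₁ l₁) := by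
  cases hf with
  | node s l A B hAB hA hB hall =>
    subst hAB
    have hlen : j < (A ++ B).length := by
      by_contra hcon
      push_neg at hcon
      rw [List.getElem?_eq_none hcon] at hj
      simp at hj
    have hjlen : j < A.length + B.length := by simpa using hlen
    have hjA : j < A.length := by
      by_contra hcon
      push_neg at hcon
      have hlt : j < (A ++ B).length := by simp; omega
      have : (A ++ B)[j]'hlt = B[j - A.length]'(by simp at hlt; omega) :=
        List.getElem_append_right hcon
      have hmem : (A ++ B)[j]'hlt ∈ B := this ▸ List.getElem_mem _
      have hleaf := hB _ hmem
      rw [List.getElem?_eq_getElem hlt] at hj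
      rw [hleaf] at hj
      simp at hj
    intro m hm
    have hmA : m < A.length := by omega
    have hlt : m < (A ++ B).length := by simp; omega
    have hval : (A ++ B)[m]'hlt = A[m]'hmA := List.getElem_append_left hmA
    have hmem : (A ++ B)[m]'hlt ∈ A := hval ▸ List.getElem_mem _
    have := hA _ hmem
    rw [List.getElem?_eq_getElem hlt]
    cases hc : (A ++ B)[m]'hlt with
    | leaf => rw [hc] at this; simp [isLeaf] at this
    | node s₁ l₁ => exact ⟨s₁, l₁, rfl⟩

lemma nodeAddr_lt_of_lexLt {T : PreTerm σ} {i₁ i₂ : ℕ} {q₁ q₂ : List ℕ}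
    (h₁ : nodeAddr T i₁ = some q₁) (h₂ : nodeAddr T i₂ = some q₂)
    (hι₁ : 1 ≤ i₁) (hι₂ : 1 ≤ i₂) (hlex : LexLt q₁ q₂) : i₁ < i₂ := by
  obtain ⟨hl₁, hv₁⟩ := nodeAddr_getElem h₁
  obtain ⟨hl₂, hv₂⟩ := nodeAddr_getElem h₂
  have := idx_lt_of_lexLt (pairwise_nodeAddrs T) hl₁ hl₂ (by rw [hv₁, hv₂]; exact hlex)
  omega

lemma nodeAddr_inj {T : PreTerm σ} {i₁ i₂ : ℕ} {q : List ℕ}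
    (h₁ : nodeAddr T i₁ = some q) (h₂ : nodeAddr T i₂ = some q)
    (hι₁ : 1 ≤ i₁) (hι₂ : 1 ≤ i₂) : i₁ = i₂ := by
  obtain ⟨hl₁, hv₁⟩ := nodeAddr_getElem h₁
  obtain ⟨hl₂, hv₂⟩ := nodeAddr_getElem h₂
  have e₁ := nodeIdx_eq_of_getElem hl₁ hv₁
  have e₂ := nodeIdx_eq_of_getElem hl₂ hv₂
  omega

lemma nodeIdx_eq_self {T : PreTerm σ} {i : ℕ} {q : List ℕ}
    (h : nodeAddr T i = some q) (h1 : 1 ≤ i) : nodeIdx T q = i := by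
  obtain ⟨hl, hv⟩ := nodeAddr_getElem h
  have := nodeIdx_eq_of_getElem hl hv
  omega

lemma lp_count {T : PreTerm σ} (hf : FTP T) {i : ℕ} {p : List ℕ}
    (hi : nodeAddr T i = some p) (h1 : 1 ≤ i) (hp : p ≠ []) :
    lpOf T i = ((Finset.Icc (paOf T i + 1) i).filter (fun k => paOf T k = paOf T i)).card := by
  obtain ⟨h1pa, hpalt, hjaddr, hjsc, hjdeg⟩ := pa_spec hi h1 hp
  set j := paOf T i with hjdef
  set a := p.getLast hp with hadef
  set p' := p.dropLast with hp'def
  have hdec : p' ++ [a] = p := List.dropLast_append_getLast hp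
  have hideg : i ≤ deg T := by
    obtain ⟨hl, _⟩ := nodeAddr_getElem hi
    rw [← deg_def] at hl
    omega
  obtain ⟨s, l, hs⟩ := mem_nodeAddrs_iff.1 (mem_of_nodeAddr hi)
  obtain ⟨s', l', hP⟩ := parent_subAt hp hs
  have hfP : FTP (.node s' l') := ftp_subAt hf hP
  have hla : l'[a]? = some (.node s l) := by
    have hsub : subAt T (p' ++ [a]) = some (.node s l) := by rw [hdec]; exact hs
    rw [subAt_append, hP, Option.bind_some] at hsub
    simp only [subAt] at hsub
    cases hc : l'[a]? with
    | none => rw [hc] at hsub; simp at hsub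
    | some t =>
      rw [hc] at hsub
      rw [Option.some.inj hsub]
  have hch := ftp_children hfP hla
  have hidxp' : nodeIdx T p' = j := nodeIdx_eq_self hjaddr h1pa
  -- facts about φ m for m ≤ a
  have haddr : ∀ m ≤ a, nodeAddr T (nodeIdx T (p' ++ [m])) = some (p' ++ [m]) := by
    intro m hm
    obtain ⟨s₁, l₁, hm1⟩ := hch m hm
    apply nodeAddr_of_mem
    apply mem_nodeAddrs_iff.2 ⟨s₁, l₁, ?_⟩
    rw [subAt_append, hP, Option.bind_some]
    simp only [subAt, hm1]
  have hφ1 : ∀ m, 1 ≤ nodeIdx T (p' ++ [m]) := by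
    intro m; rw [nodeIdx_def]; omega
  have hφgt : ∀ m ≤ a, j < nodeIdx T (p' ++ [m]) := by
    intro m hm
    apply nodeAddr_lt_of_lexLt hjaddr (haddr m hm) h1pa (hφ1 m)
    exact lexLt_of_prefix (List.prefix_append p' [m]) (by simp)
  have hφa : nodeIdx T (p' ++ [a]) = i := by
    rw [hdec]; exact nodeIdx_eq_self hi h1
  have hφle : ∀ m ≤ a, nodeIdx T (p' ++ [m]) ≤ i := by
    intro m hm
    rcases eq_or_lt_of_le hm with rfl | hlt
    · rw [hφa]
    · have : nodeIdx T (p' ++ [m]) < nodeIdx T (p' ++ [a]) := by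
        apply nodeAddr_lt_of_lexLt (haddr m hm) (haddr a (le_refl a)) (hφ1 m) (hφ1 a)
        exact (lexLt_append_last p' m a).2 hlt
      omega
  have hφpa : ∀ m ≤ a, paOf T (nodeIdx T (p' ++ [m])) = j := by
    intro m hm
    have h := paOf_eq (haddr m hm) (by simp)
    rw [h]
    rw [show (p' ++ [m]).dropLast = p' from List.dropLast_concat]
    exact hidxp'
  have himg : (Finset.Icc (j + 1) i).filter (fun k => paOf T k = j) =
      (Finset.range (a+1)).image (fun m => nodeIdx T (p' ++ [m])) := by
    apply Finset.ext
    intro k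
    simp only [Finset.mem_filter, Finset.mem_Icc, Finset.mem_image, Finset.mem_range]
    constructor
    · rintro ⟨⟨hk1, hk2⟩, hkpa⟩
      obtain ⟨q, hq⟩ := nodeAddr_exists (T := T) (i := k) (by omega) (by omega)
      have hqnil : q ≠ [] := by
        rintro rfl
        have := eq_one_of_nodeAddr_nil hq (by omega)
        omega
      obtain ⟨_, _, hkaddr, _, _⟩ := pa_spec hq (by omega) hqnil
      rw [hkpa, hjaddr] at hkaddr
      have hqd : q.dropLast = p' := (Option.some.inj hkaddr).symm
      have hqdec : q.dropLast ++ [q.getLast hqnil] = q := List.dropLast_append_getLast hqnil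
      set m := q.getLast hqnil with hmdef
      have hqm : q = p' ++ [m] := by rw [← hqdec, hqd]
      have hma : m ≤ a := by
        rcases eq_or_lt_of_le hk2 with rfl | hklt
        · have : q = p := Option.some.inj ((hq.symm).trans hi)
          rw [hqm, ← hdec] at this
          have := List.append_cancel_left this
          simp at this
          omega
        · have hlex : LexLt q p := by
            obtain ⟨hlk, hvk⟩ := nodeAddr_getElem hq
            obtain ⟨hli, hvi⟩ := nodeAddr_getElem hi
            have := List.pairwise_iff_getElem.1 (pairwise_nodeAddrs T) (k-1) (i-1) hlk hli
              (by omega)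
            rwa [hvk, hvi] at this
          rw [hqm, ← hdec] at hlex
          have := (lexLt_append_last p' m a).1 hlex
          omega
      refine ⟨m, by omega, ?_⟩
      have : nodeAddr T k = some (p' ++ [m]) := by rw [← hqm]; exact hq
      exact nodeAddr_inj (haddr m hma) this (hφ1 m) (by omega)
    · rintro ⟨m, hm, rfl⟩
      have hma : m ≤ a := by omega
      exact ⟨⟨by have := hφgt m hma; omega, hφle m hma⟩, hφpa m hma⟩
  rw [himg]
  rw [Finset.card_image_of_injOn]
  · rw [Finset.card_range]
    have : lpOf T i = a + 1 := lpOf_eq (by rw [hdec]; exact hi)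
    omega
  · intro m₁ hm₁ m₂ hm₂ he
    simp only [Finset.mem_coe, Finset.mem_range] at hm₁ hm₂
    have e₁ := haddr m₁ (by omega)
    have e₂ := haddr m₂ (by omega)
    have he' : nodeIdx T (p' ++ [m₁]) = nodeIdx T (p' ++ [m₂]) := he
    rw [he'] at e₁
    have := Option.some.inj (e₁.symm.trans e₂)
    have := List.append_cancel_left this
    simpa using this

lemma cnc_bound {T : PreTerm σ} (hw : WF T) {i : ℕ} (h1 : 1 ≤ i) (h2 : i ≤ deg T) :
    (paOf T i : ℚ) ≤ cnc T i ∧ cnc T i < paOf T i + 1 := by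
  obtain ⟨p, hp⟩ := nodeAddr_exists (T := T) h1 h2
  have hlp := lp_le_arity hw hp h1
  rw [cnc_def]
  have hzle : (lpOf T i : ℤ) - (arityOfNode T (paOf T i) : ℤ) ≤ 0 := by omega
  have hb : (0 : ℚ) < (2:ℚ) ^ ((lpOf T i : ℤ) - (arityOfNode T (paOf T i) : ℤ)) :=
    zpow_pos (by norm_num) _
  have hu : (2:ℚ) ^ ((lpOf T i : ℤ) - (arityOfNode T (paOf T i) : ℤ)) ≤ 1 := by
    rw [show (1:ℚ) = (2:ℚ) ^ (0:ℤ) by norm_num]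
    exact zpow_le_zpow_right₀ (by norm_num) hzle
  constructor <;> linarith

lemma pa_mono_of_cnc {T₁ T₂ : PreTerm σ} (hw₁ : WF T₁) (hw₂ : WF T₂)
    (hdeg : deg T₁ = deg T₂)
    (hc : ∀ i, 1 ≤ i → i ≤ deg T₁ → cnc T₁ i ≤ cnc T₂ i)
    {k : ℕ} (h1 : 1 ≤ k) (h2 : k ≤ deg T₁) : paOf T₁ k ≤ paOf T₂ k := by
  obtain ⟨hb₁, _⟩ := cnc_bound hw₁ h1 h2
  obtain ⟨_, hb₂⟩ := cnc_bound hw₂ h1 (by omega)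
  have := hc k h1 h2
  have hq : (paOf T₁ k : ℚ) < (paOf T₂ k : ℚ) + 1 := by linarith
  have : (paOf T₁ k : ℚ) < ((paOf T₂ k + 1 : ℕ) : ℚ) := by push_cast; linarith
  have := Nat.cast_lt.1 this
  omega

lemma pa_mono_of_sc {T₁ T₂ : PreTerm σ} (hdeg : deg T₁ = deg T₂)
    (hs : ∀ i, 1 ≤ i → i ≤ deg T₁ → sc T₁ i ≤ sc T₂ i)
    {k : ℕ} (h2k : 2 ≤ k) (hk : k ≤ deg T₁) : paOf T₁ k ≤ paOf T₂ k := by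
  obtain ⟨p₁, hp₁⟩ := nodeAddr_exists (T := T₁) (i := k) (by omega) hk
  have hp₁nil : p₁ ≠ [] := by
    rintro rfl
    have := eq_one_of_nodeAddr_nil hp₁ (by omega)
    omega
  obtain ⟨h1j, hjlt, hjaddr, hjsc, hjdeg⟩ := pa_spec hp₁ (by omega) hp₁nil
  set j := paOf T₁ k with hjdef
  obtain ⟨q₁, hq₁⟩ := nodeAddr_exists (T := T₂) (i := j) h1j (by omega)
  obtain ⟨q₂, hq₂⟩ := nodeAddr_exists (T := T₂) (i := k) (by omega) (by omega)
  have hksc : k ≤ j + sc T₂ j := by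
    have := hs j h1j hjdeg
    omega
  have hpre : q₁ <+: q₂ := (desc_iff hq₁ hq₂ h1j (by omega)).2 ⟨by omega, hksc⟩
  have hne : q₁ ≠ q₂ := by
    rintro rfl
    have := nodeAddr_inj hq₁ hq₂ h1j (by omega)
    omega
  exact pa_max hq₂ hq₁ (by omega) h1j hpre hne

lemma sc_mono_of_cnc {T₁ T₂ : PreTerm σ} (hw₁ : WF T₁) (hw₂ : WF T₂)
    (hdeg : deg T₁ = deg T₂)
    (hc : ∀ i, 1 ≤ i → i ≤ deg T₁ → cnc T₁ i ≤ cnc T₂ i)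
    {i : ℕ} (h1 : 1 ≤ i) (h2 : i ≤ deg T₁) : sc T₁ i ≤ sc T₂ i := by
  obtain ⟨p₁, hp₁⟩ := nodeAddr_exists (T := T₁) h1 h2
  obtain ⟨p₂, hp₂⟩ := nodeAddr_exists (T := T₂) h1 (by omega)
  rcases eq_or_ne p₁ [] with rfl | hp₁nil
  · -- root
    have hi1 : i = 1 := eq_one_of_nodeAddr_nil hp₁ h1
    subst hi1
    have h₂root : nodeAddr T₂ 1 = some [] := nodeAddr_one_of_exists hp₂
    have e₁ : sc T₁ 1 = deg T₁ - 1 := sc_eq hp₁ (subAt_nil T₁)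
    have e₂ : sc T₂ 1 = deg T₂ - 1 := sc_eq h₂root (subAt_nil T₂)
    omega
  · rcases Nat.eq_zero_or_pos (sc T₁ i) with hz | hpos
    · omega
    · set m := i + sc T₁ i with hmdef
      have hmn : m ≤ deg T₁ := sc_bound hp₁ h1
      have hyp : ∀ k, i < k → k ≤ m → i ≤ paOf T₂ k := by
        intro k hik hkm
        obtain ⟨pk, hpk⟩ := nodeAddr_exists (T := T₁) (i := k) (by omega) (by omega)
        have hpre : p₁ <+: pk := (desc_iff hp₁ hpk h1 (by omega)).2 ⟨by omega, by omega⟩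
        have hne : p₁ ≠ pk := by
          rintro rfl
          have := nodeAddr_inj hp₁ hpk h1 (by omega)
          omega
        have h₁pa : i ≤ paOf T₁ k := pa_max hpk hp₁ (by omega) h1 hpre hne
        have h₂pa : paOf T₁ k ≤ paOf T₂ k :=
          pa_mono_of_cnc hw₁ hw₂ hdeg hc (by omega) (by omega)
        omega
      have := chain (T := T₂) h1 m hyp (by omega) (by omega)
      omega

lemma cnc_mono_of_sc {T₁ T₂ : PreTerm σ} (hw₁ : WF T₁) (hw₂ : WF T₂)
    (hf₁ : FTP T₁) (hf₂ : FTP T₂) (hdeg : deg T₁ = deg T₂) (hd : dcWord T₁ = dcWord T₂)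
    (hs : ∀ i, 1 ≤ i → i ≤ deg T₁ → sc T₁ i ≤ sc T₂ i)
    {i : ℕ} (h1 : 1 ≤ i) (h2 : i ≤ deg T₁) : cnc T₁ i ≤ cnc T₂ i := by
  obtain ⟨p₁, hp₁⟩ := nodeAddr_exists (T := T₁) h1 h2
  obtain ⟨p₂, hp₂⟩ := nodeAddr_exists (T := T₂) h1 (by omega)
  rcases eq_or_ne p₁ [] with rfl | hp₁nil
  · have hi1 : i = 1 := eq_one_of_nodeAddr_nil hp₁ h1
    subst hi1
    have h₂root : nodeAddr T₂ 1 = some [] := nodeAddr_one_of_exists hp₂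
    have har : arityOfNode T₁ 1 = arityOfNode T₂ 1 := arity_congr hd hp₁ h₂root
    rw [cnc_def, cnc_def, paOf_root hp₁, paOf_root h₂root, lpOf_root hp₁, lpOf_root h₂root,
      har]
  · have hi2 : 2 ≤ i := by
      rcases Nat.lt_or_ge i 2 with h | h
      · interval_cases i
        exact absurd (Option.some.inj ((nodeAddr_one_of_exists hp₁).symm.trans hp₁)).symm hp₁nil
      · exact h
    have hp₂nil : p₂ ≠ [] := by
      rintro rfl
      have := eq_one_of_nodeAddr_nil hp₂ h1
      omega
    obtain ⟨h1j₁, hj₁lt, hj₁addr, hj₁sc, hj₁deg⟩ := pa_spec hp₁ h1 hp₁nil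
    obtain ⟨h1j₂, hj₂lt, hj₂addr, hj₂sc, hj₂deg⟩ := pa_spec hp₂ h1 hp₂nil
    set j₁ := paOf T₁ i with hj₁def
    set j₂ := paOf T₂ i with hj₂def
    have hjle : j₁ ≤ j₂ := pa_mono_of_sc hdeg hs hi2 h2
    -- arities
    have hlp₁ := lp_le_arity hw₁ hp₁ h1
    have hlp₂ := lp_le_arity hw₂ hp₂ h1
    have hae : j₁ = j₂ → arityOfNode T₁ j₁ = arityOfNode T₂ j₂ := by
      intro hj
      obtain ⟨q₂, hq₂⟩ := nodeAddr_exists (T := T₂) (i := j₁) h1j₁ (by omega)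
      have := arity_congr hd hj₁addr hq₂
      rw [← hj]
      exact this
    rw [cnc_def, cnc_def, ← hj₁def, ← hj₂def]
    rw [cnc_arith hlp₁ hlp₂ hae]
    rcases lt_or_eq_of_le hjle with hlt | heq
    · exact Or.inl hlt
    · refine Or.inr ⟨heq, ?_⟩
      -- compare lp via counting
      have hc₁ := lp_count hf₁ hp₁ h1 hp₁nil
      have hc₂ := lp_count hf₂ hp₂ h1 hp₂nil
      rw [hc₁, hc₂, ← hj₁def, ← hj₂def, ← heq]
      apply Finset.card_le_card
      intro k hk
      simp only [Finset.mem_filter, Finset.mem_Icc] at hk ⊢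
      obtain ⟨⟨hk1, hk2⟩, hkpa⟩ := hk
      refine ⟨⟨hk1, hk2⟩, ?_⟩
      have hkn : k ≤ deg T₁ := by omega
      have h₂k : paOf T₁ k ≤ paOf T₂ k := pa_mono_of_sc hdeg hs (by omega) hkn
      -- j₁ ≤ paOf T₁ k via ancestry in T₁
      obtain ⟨pk, hpk⟩ := nodeAddr_exists (T := T₁) (i := k) (by omega) hkn
      have hpre : p₁.dropLast <+: pk :=
        (desc_iff hj₁addr hpk h1j₁ (by omega)).2 ⟨by omega, by omega⟩
      have hne : p₁.dropLast ≠ pk := by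
        rintro heq2
        rw [heq2] at hj₁addr
        have := nodeAddr_inj hj₁addr hpk h1j₁ (by omega)
        omega
      have h₁k : j₁ ≤ paOf T₁ k := pa_max hpk hj₁addr (by omega) h1j₁ hpre hne
      omega

end EW



/-- for fully tilted Σ-terms of the same degree and decoration
word, the easterly wind order coincides with componentwise comparison of scope
sequences. -/
theorem stmt8 (σ : Signature) (n : ℕ) (T₁ T₂ : EW.PreTerm σ)
    (h₁ : EW.WF T₁) (h₂ : EW.WF T₂)
    (hf₁ : EW.FullyTilted T₁) (hf₂ : EW.FullyTilted T₂)
    (hn₁ : EW.deg T₁ = n) (hn₂ : EW.deg T₂ = n)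
    (hd : EW.dcWord T₁ = EW.dcWord T₂) :
    EW.ewLE T₁ T₂ ↔ ∀ i, 1 ≤ i → i ≤ n → EW.sc T₁ i ≤ EW.sc T₂ i := by
  have hdeg : EW.deg T₁ = EW.deg T₂ := by omega
  constructor
  · rintro ⟨_, hc⟩ i hi1 hi2
    exact EW.sc_mono_of_cnc h₁ h₂ hdeg hc hi1 (by omega)
  · intro hs
    refine ⟨hd, fun i hi1 hi2 => ?_⟩
    exact EW.cnc_mono_of_sc h₁ h₂ (EW.fullyTilted_ftp hf₁) (EW.fullyTilted_ftp hf₂)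
      hdeg hd (fun k hk1 hk2 => hs k hk1 (by omega)) hi1 hi2
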